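/- arXiv:1306.4022 — 2 statements merged into one kernel-verified Lean document; each statement's English description precedes it below -/
import Mathlib

section
/- Let G_1,…,G_k be probability distributions on [0,∞), and let n bidders have value distributions F_i = Σ_{t=1}^k p_{i,t} G_t for nonnegative mixture weights with Σ_t p_{i,t} = 1. Then the optimal revenue for the mixture profile is at most the mixture-weighted average of the optimal revenues of the conditioned regular profiles: OPT(F_1,…,F_n) ≤ Σ_{q ∈ {1,…,k}^n} (∏_{i=1}^n p_{i,q_i}) · OPT(G_{q_1},…,G_{q_n}). -/
open MeasureTheory ProbabilityTheory Real Finset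

noncomputable section

/-- A regular distribution: a probability measure on an interval of `[0,∞)` with a
positive continuous density whose virtual value `x - (1 - F(x))/f(x)` is nondecreasing. -/
structure RegularDist where
  μ : Measure ℝ
  prob : IsProbabilityMeasure μ
  supp : Set ℝ
  dens : ℝ → ℝ
  supp_subset : supp ⊆ Set.Ici 0
  supp_interval : supp.OrdConnected
  dens_cont : ContinuousOn dens supp
  dens_pos : ∀ x ∈ supp, 0 < dens x
  dens_zero : ∀ x ∉ supp, dens x = 0
  eq_withDensity : μ = volume.withDensity (fun x => ENNReal.ofReal (dens x))
  regular : MonotoneOn (fun x => x - (1 - (μ (Set.Iic x)).toReal) / dens x) supp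

/-- `F` hazard-rate dominates `G`: the hazard rate of `F` is at most that of `G`
on the intersection of their supports. -/
def HRDominates (F G : RegularDist) : Prop :=
  ∀ x ∈ F.supp ∩ G.supp,
    F.dens x / (1 - (F.μ (Set.Iic x)).toReal) ≤ G.dens x / (1 - (G.μ (Set.Iic x)).toReal)

/-- A dominant-strategy truthful, individually rational single-item mechanism for `n`
bidders with nonnegative values. -/
structure Mechanism (n : ℕ) where
  alloc : (Fin n → ℝ) → Fin n → ℝ
  pay : (Fin n → ℝ) → Fin n → ℝ
  alloc_meas : ∀ i, Measurable fun v => alloc v i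
  pay_meas : ∀ i, Measurable fun v => pay v i
  alloc_bool : ∀ v i, alloc v i = 0 ∨ alloc v i = 1
  alloc_sum_le_one : ∀ v, ∑ i, alloc v i ≤ 1
  pay_nonneg : ∀ v i, 0 ≤ pay v i
  truthful : ∀ v, (∀ i, 0 ≤ v i) → ∀ i b, 0 ≤ b →
    v i * alloc (Function.update v i b) i - pay (Function.update v i b) i ≤
      v i * alloc v i - pay v i
  ir : ∀ v, (∀ i, 0 ≤ v i) → ∀ i, 0 ≤ v i * alloc v i - pay v i

/-- The optimal revenue for `n` independent bidders with value distributions `F i`. -/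
def optRevenue (n : ℕ) (F : Fin n → Measure ℝ) : ℝ :=
  ⨆ M : Mechanism n, ∫ v, ∑ i, M.pay v i ∂(Measure.pi F)

/-- The highest value in a profile. -/
def highest {m : ℕ} (v : Fin m → ℝ) : ℝ := ⨆ i, v i

/-- The second-highest value in a profile (the maximum over pairs of distinct
indices of the smaller of the two values). -/
def secondHighest {m : ℕ} (v : Fin m → ℝ) : ℝ :=
  ⨆ p : {p : Fin m × Fin m // p.1 ≠ p.2}, min (v p.1.1) (v p.1.2)

/-- Expected revenue of the Vickrey auction (no reserve) when the value profile is
distributed according to `μ`. -/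
def vickreyRev {m : ℕ} (μ : Measure (Fin m → ℝ)) : ℝ :=
  ∫ v, secondHighest v ∂μ

/-- Revenue of the Vickrey auction with reserve `r` on the value profile `v`. -/
def vickreyReserve {m : ℕ} (r : ℝ) (v : Fin m → ℝ) : ℝ :=
  if r ≤ highest v then max r (secondHighest v) else 0

end

/-! Since `Measure.pi` is multilinear, the mixture profile is the `∏ i, p i (q i)`-weighted sum
of the conditioned product profiles, so a mechanism's expected revenue under the mixture is the
weighted average of its revenues under the conditioned profiles, each at most the optimal one.

`optRevenue` is a real `⨆`, which is `0` when revenues are unbounded, so that case needs its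
own argument: if a conditioned profile of positive weight admits arbitrarily large revenue, then
so does the mixture, witnessed by mechanisms that first clamp all bids to `[0, N]` and hence have
integrable revenue. -/

open scoped ENNReal

instance MeasureTheory.isFiniteMeasure_ofReal_smul {α : Type*} [MeasurableSpace α]
    (μ : Measure α) [IsFiniteMeasure μ] (c : ℝ) : IsFiniteMeasure (ENNReal.ofReal c • μ) :=
  μ.smul_finite ENNReal.ofReal_ne_top

theorem MeasureTheory.Measure.pi_sum_smul {ι κ α : Type*} [Fintype ι] [DecidableEq ι]
    [Fintype κ] [MeasurableSpace α] {G : κ → Measure α} {w : ι → κ → ℝ≥0∞}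
    [∀ t, SigmaFinite (G t)] [∀ i, SigmaFinite (∑ t, w i t • G t)] :
    Measure.pi (fun i => ∑ t, w i t • G t) =
      ∑ q : ι → κ, (∏ i, w i (q i)) • Measure.pi fun i => G (q i) := by
  refine Measure.pi_eq fun s _ => ?_
  simp only [Measure.coe_finsetSum, Finset.sum_apply, Measure.smul_apply, smul_eq_mul,
    Measure.pi_pi, ← Finset.prod_mul_distrib, Finset.prod_univ_sum, Fintype.piFinset_univ]

theorem MeasureTheory.integral_sum_ofReal_smul_measure {α Q : Type*} [MeasurableSpace α]
    [Fintype Q] {f : α → ℝ} {w : Q → ℝ} (hw : ∀ q, 0 ≤ w q) {μ : Q → Measure α}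
    (hf : Integrable f (∑ q, ENNReal.ofReal (w q) • μ q)) :
    ∫ x, f x ∂(∑ q, ENNReal.ofReal (w q) • μ q) = ∑ q, w q * ∫ x, f x ∂μ q := by
  rw [integral_finsetSum_measure (integrable_finsetSum_measure.mp hf)]
  simp only [integral_smul_measure, ENNReal.toReal_ofReal (hw _), smul_eq_mul]

theorem MeasureTheory.ae_forall_nonneg_pi {ι : Type*} [Fintype ι] {μ : ι → Measure ℝ}
    [∀ i, SigmaFinite (μ i)] (h : ∀ i, μ i (Set.Iio 0) = 0) :
    ∀ᵐ v ∂Measure.pi μ, ∀ i, 0 ≤ v i := by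
  refine ae_all_iff.mpr fun i => Measure.tendsto_eval_ae_ae.eventually ?_
  exact ae_iff.mpr (measure_mono_null (fun x (hx : ¬0 ≤ x) => not_le.mp hx) (h i))

def clampAt (N x : ℝ) : ℝ := max (min x N) 0

lemma clampAt_nonneg (N x : ℝ) : 0 ≤ clampAt N x := le_max_right _ _

lemma clampAt_le {N : ℝ} (hN : 0 ≤ N) (x : ℝ) : clampAt N x ≤ N :=
  max_le (min_le_right _ _) hN

lemma clampAt_le_self {N x : ℝ} (hx : 0 ≤ x) : clampAt N x ≤ x :=
  max_le (min_le_left _ _) hx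

lemma clampAt_of_mem_Icc {N x : ℝ} (hx : x ∈ Set.Icc 0 N) : clampAt N x = x := by
  rw [clampAt, min_eq_left hx.2, max_eq_left hx.1]

lemma clampAt_of_le_of_nonneg {N x : ℝ} (hN : N ≤ x) (hN0 : 0 ≤ N) : clampAt N x = N := by
  rw [clampAt, min_eq_right hN, max_eq_left hN0]

lemma measurable_clampAt_comp {ι : Type*} (N : ℝ) :
    Measurable fun v : ι → ℝ => clampAt N ∘ v :=
  measurable_pi_lambda _ fun j =>
    ((measurable_pi_apply j).min measurable_const).max measurable_const

namespace Mechanism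

variable {n : ℕ} (M : Mechanism n)

lemma alloc_nonneg (v : Fin n → ℝ) (i : Fin n) : 0 ≤ M.alloc v i := by
  rcases M.alloc_bool v i with h | h <;> simp [h]

lemma pay_le {v : Fin n → ℝ} (hv : ∀ i, 0 ≤ v i) (i : Fin n) : M.pay v i ≤ v i := by
  have h := M.ir v hv i
  rcases M.alloc_bool v i with h0 | h1
  · rw [h0, mul_zero] at h
    linarith [M.pay_nonneg v i, hv i]
  · rw [h1, mul_one] at h
    linarith

lemma alloc_update_le_of_le {v : Fin n → ℝ} (hv : ∀ j, 0 ≤ v j) (i : Fin n) {b c : ℝ}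
    (hb : 0 ≤ b) (hbc : b ≤ c) :
    M.alloc (Function.update v i b) i ≤ M.alloc (Function.update v i c) i := by
  have hnonneg : ∀ x, 0 ≤ x → ∀ j, 0 ≤ Function.update v i x j := fun x hx j => by
    rcases eq_or_ne j i with rfl | h
    · simpa using hx
    · simpa [Function.update_of_ne h] using hv j
  have hbc' := M.truthful _ (hnonneg b hb) i c (hb.trans hbc)
  have hcb' := M.truthful _ (hnonneg c (hb.trans hbc)) i b hb
  simp only [Function.update_idem, Function.update_self] at hbc' hcb'
  rcases hbc.lt_or_eq with hlt | rfl
  · nlinarith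
  · exact le_rfl

def capAt (N : ℝ) (hN : 0 ≤ N) : Mechanism n where
  alloc v := M.alloc (clampAt N ∘ v)
  pay v := M.pay (clampAt N ∘ v)
  alloc_meas i := (M.alloc_meas i).comp (measurable_clampAt_comp N)
  pay_meas i := (M.pay_meas i).comp (measurable_clampAt_comp N)
  alloc_bool v i := M.alloc_bool _ i
  alloc_sum_le_one v := M.alloc_sum_le_one _
  pay_nonneg v i := M.pay_nonneg _ i
  truthful v hv i b _ := by
    have hw : ∀ j, 0 ≤ (clampAt N ∘ v) j := fun j => clampAt_nonneg N _
    have htr := M.truthful _ hw i (clampAt N b) (clampAt_nonneg N b)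
    rw [Function.comp_update]
    rcases le_or_gt (v i) N with hle | hlt
    · rwa [Function.comp_apply, clampAt_of_mem_Icc ⟨hv i, hle⟩] at htr
    · -- a bidder worth more than `N` is seen as `N`, the highest clamped bid
      have hwi : (clampAt N ∘ v) i = N := clampAt_of_le_of_nonneg hlt.le hN
      have hmono := M.alloc_update_le_of_le hw i (clampAt_nonneg N b)
        ((clampAt_le hN b).trans hwi.ge)
      rw [Function.update_eq_self] at hmono
      rw [hwi] at htr
      nlinarith [mul_le_mul_of_nonneg_left hmono (sub_nonneg.2 hlt.le)]
  ir v hv i := by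
    have hw : ∀ j, 0 ≤ (clampAt N ∘ v) j := fun j => clampAt_nonneg N _
    have hle : (clampAt N ∘ v) i ≤ v i := clampAt_le_self (hv i)
    nlinarith [M.ir _ hw i, mul_le_mul_of_nonneg_right hle (M.alloc_nonneg (clampAt N ∘ v) i)]

lemma capAt_pay_le {N : ℝ} (hN : 0 ≤ N) (v : Fin n → ℝ) (i : Fin n) :
    (M.capAt N hN).pay v i ≤ N :=
  (M.pay_le (fun j => clampAt_nonneg N (v j)) i).trans (clampAt_le hN _)

lemma capAt_pay_of_mem {N : ℝ} (hN : 0 ≤ N) {v : Fin n → ℝ}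
    (hv : v ∈ Set.univ.pi fun _ => Set.Icc 0 N) : (M.capAt N hN).pay v = M.pay v := by
  have hclamp : clampAt N ∘ v = v := funext fun j => clampAt_of_mem_Icc (hv j (Set.mem_univ j))
  simp only [capAt, hclamp]

noncomputable def revenue (μ : Measure (Fin n → ℝ)) : ℝ := ∫ v, ∑ i, M.pay v i ∂μ

lemma revenue_nonneg (μ : Measure (Fin n → ℝ)) : 0 ≤ M.revenue μ :=
  integral_nonneg fun v => Finset.sum_nonneg fun i _ => M.pay_nonneg v i

lemma integrable_revenue_of_pay_le {μ : Measure (Fin n → ℝ)} [IsFiniteMeasure μ] {C : ℝ}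
    (hC : ∀ v i, M.pay v i ≤ C) : Integrable (fun v => ∑ i, M.pay v i) μ := by
  have hmeas : Measurable fun v => ∑ i, M.pay v i :=
    Finset.measurable_sum _ fun i _ => M.pay_meas i
  refine Integrable.of_bound hmeas.aestronglyMeasurable (∑ _i : Fin n, C)
    (ae_of_all _ fun v => ?_)
  rw [Real.norm_eq_abs, abs_of_nonneg (Finset.sum_nonneg fun i _ => M.pay_nonneg v i)]
  exact Finset.sum_le_sum fun i _ => hC v i

lemma exists_capAt_revenue_gt {μ : Measure (Fin n → ℝ)} [IsFiniteMeasure μ]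
    (hμ : ∀ᵐ v ∂μ, ∀ i, 0 ≤ v i) {c : ℝ} (hc : c < M.revenue μ) :
    ∃ N : ℕ, c < (M.capAt N N.cast_nonneg).revenue μ := by
  by_cases hM : Integrable (fun v => ∑ i, M.pay v i) μ
  swap
  · rw [revenue, integral_undef hM] at hc
    exact ⟨0, hc.trans_le (revenue_nonneg _ _)⟩
  set K : ℕ → Set (Fin n → ℝ) := fun N => Set.univ.pi fun _ => Set.Icc 0 (N : ℝ)
  have hK_meas : ∀ N, MeasurableSet (K N) := fun N => .univ_pi fun _ => measurableSet_Icc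
  have hK_mono : Monotone K := fun N N' h => Set.pi_mono fun _ _ =>
    Set.Icc_subset_Icc_right (Nat.cast_le.mpr h)
  have hK_ae : ∀ᵐ v ∂μ, v ∈ ⋃ N, K N := by
    filter_upwards [hμ] with v hv
    obtain ⟨N, hN⟩ := (Filter.eventually_all.mpr fun i =>
      Filter.eventually_ge_atTop ⌈v i⌉₊).exists
    exact Set.mem_iUnion.mpr
      ⟨N, fun i _ => ⟨hv i, (Nat.le_ceil _).trans (Nat.cast_le.mpr (hN i))⟩⟩
  have hlim := tendsto_setIntegral_of_monotone hK_meas hK_mono hM.integrableOn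
  rw [Measure.restrict_eq_self_of_ae_mem hK_ae] at hlim
  obtain ⟨N, hN⟩ := (hlim.eventually (eventually_gt_nhds hc)).exists
  refine ⟨N, hN.trans_le ?_⟩
  calc ∫ v in K N, ∑ i, M.pay v i ∂μ
      = ∫ v in K N, ∑ i, (M.capAt N N.cast_nonneg).pay v i ∂μ :=
        setIntegral_congr_fun (hK_meas N) fun v hv => by rw [M.capAt_pay_of_mem _ hv]
    _ ≤ (M.capAt N N.cast_nonneg).revenue μ :=
        setIntegral_le_integral ((M.capAt N _).integrable_revenue_of_pay_le (capAt_pay_le M _))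
          (ae_of_all _ fun v => Finset.sum_nonneg fun i _ => pay_nonneg _ v i)

end Mechanism

noncomputable def optRevenueOfLaw {n : ℕ} (μ : Measure (Fin n → ℝ)) : ℝ :=
  ⨆ M : Mechanism n, M.revenue μ

section Mixture

variable {n : ℕ} {Q : Type*} [Fintype Q] {w : Q → ℝ} {μ : Q → Measure (Fin n → ℝ)}

lemma optRevenueOfLaw_nonneg (ν : Measure (Fin n → ℝ)) : 0 ≤ optRevenueOfLaw ν :=
  Real.iSup_nonneg fun M => M.revenue_nonneg ν

lemma Mechanism.revenue_sum_smul_le (hw : ∀ q, 0 ≤ w q)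
    (hbdd : ∀ q, 0 < w q → BddAbove (Set.range fun M : Mechanism n => M.revenue (μ q)))
    (M : Mechanism n) :
    M.revenue (∑ q, ENNReal.ofReal (w q) • μ q) ≤ ∑ q, w q * optRevenueOfLaw (μ q) := by
  by_cases hM : Integrable (fun v => ∑ i, M.pay v i) (∑ q, ENNReal.ofReal (w q) • μ q)
  · rw [revenue, integral_sum_ofReal_smul_measure hw hM]
    refine Finset.sum_le_sum fun q _ => ?_
    rcases (hw q).eq_or_lt with h0 | hpos
    · simp [← h0]
    · exact mul_le_mul_of_nonneg_left (le_ciSup (hbdd q hpos) M) (hw q)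
  · rw [revenue, integral_undef hM]
    exact Finset.sum_nonneg fun q _ => mul_nonneg (hw q) (optRevenueOfLaw_nonneg _)

lemma not_bddAbove_revenue_sum_smul [∀ q, IsFiniteMeasure (μ q)] (hw : ∀ q, 0 ≤ w q)
    {q₀ : Q} (hq₀ : 0 < w q₀) (hμ : ∀ᵐ v ∂μ q₀, ∀ i, 0 ≤ v i)
    (hunb : ¬BddAbove (Set.range fun M : Mechanism n => M.revenue (μ q₀))) :
    ¬BddAbove
      (Set.range fun M : Mechanism n => M.revenue (∑ q, ENNReal.ofReal (w q) • μ q)) := by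
  rw [not_bddAbove_iff] at hunb ⊢
  intro c
  obtain ⟨_, ⟨M, rfl⟩, hM⟩ := hunb (c / w q₀)
  obtain ⟨N, hN⟩ := M.exists_capAt_revenue_gt hμ hM
  set M' := M.capAt N N.cast_nonneg
  refine ⟨_, ⟨M', rfl⟩, ?_⟩
  dsimp only
  rw [Mechanism.revenue, integral_sum_ofReal_smul_measure hw
    (M'.integrable_revenue_of_pay_le (M.capAt_pay_le _))]
  calc c = w q₀ * (c / w q₀) := by field_simp
    _ < w q₀ * M'.revenue (μ q₀) := by gcongr
    _ ≤ ∑ q, w q * M'.revenue (μ q) :=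
        Finset.single_le_sum (f := fun q => w q * M'.revenue (μ q))
          (fun q _ => mul_nonneg (hw q) (M'.revenue_nonneg _)) (Finset.mem_univ q₀)

theorem optRevenueOfLaw_sum_smul_le [∀ q, IsFiniteMeasure (μ q)] (hw : ∀ q, 0 ≤ w q)
    (hμ : ∀ q, ∀ᵐ v ∂μ q, ∀ i, 0 ≤ v i) :
    optRevenueOfLaw (∑ q, ENNReal.ofReal (w q) • μ q) ≤
      ∑ q, w q * optRevenueOfLaw (μ q) := by
  have hRHS : 0 ≤ ∑ q, w q * optRevenueOfLaw (μ q) :=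
    Finset.sum_nonneg fun q _ => mul_nonneg (hw q) (optRevenueOfLaw_nonneg _)
  by_cases hbdd : ∀ q, 0 < w q → BddAbove (Set.range fun M : Mechanism n => M.revenue (μ q))
  · exact Real.iSup_le (Mechanism.revenue_sum_smul_le hw hbdd) hRHS
  · push Not at hbdd
    obtain ⟨q₀, hq₀, hunb⟩ := hbdd
    rw [optRevenueOfLaw,
      Real.iSup_of_not_bddAbove (not_bddAbove_revenue_sum_smul hw hq₀ (hμ q₀) hunb)]
    exact hRHS

end Mixture

theorem optRevenue_mixture_le_avg_general
    (n k : ℕ) (G : Fin k → MeasureTheory.Measure ℝ)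
    (hGprob : ∀ t, MeasureTheory.IsProbabilityMeasure (G t))
    (hGsupp : ∀ t, G t (Set.Iio 0) = 0)
    (p : Fin n → Fin k → ℝ) (hp : ∀ i t, 0 ≤ p i t)
    (F : Fin n → MeasureTheory.Measure ℝ)
    (hF : ∀ i, F i = ∑ t, ENNReal.ofReal (p i t) • G t) :
    optRevenue n F ≤
      ∑ q : Fin n → Fin k, (∏ i, p i (q i)) * optRevenue n (fun i => G (q i)) := by
  have hpi : Measure.pi F =
      ∑ q : Fin n → Fin k,
        ENNReal.ofReal (∏ i, p i (q i)) • Measure.pi fun i => G (q i) := by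
    rw [funext hF, Measure.pi_sum_smul]
    simp only [ENNReal.ofReal_prod_of_nonneg fun i _ => hp i _]
  change optRevenueOfLaw (Measure.pi F) ≤ ∑ q, _ * optRevenueOfLaw _
  rw [hpi]
  exact optRevenueOfLaw_sum_smul_le (fun q => Finset.prod_nonneg fun i _ => hp i (q i))
    fun q => ae_forall_nonneg_pi fun i => hGsupp (q i)

/-- Optimal revenue of a mixture profile is at most the
mixture-weighted average of conditioned optimal revenues: if each `F i` is the
mixture `∑ t, p i t • G t` of probability distributions `G t` on `[0,∞)`, then
`OPT(F_1,…,F_n) ≤ ∑_q (∏ i, p i (q i)) · OPT(G_{q 1},…,G_{q n})`. -/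
theorem optRevenue_mixture_le_avg
    (n k : ℕ) (G : Fin k → MeasureTheory.Measure ℝ)
    (hGprob : ∀ t, MeasureTheory.IsProbabilityMeasure (G t))
    (hGsupp : ∀ t, G t (Set.Iio 0) = 0)
    (p : Fin n → Fin k → ℝ) (hp : ∀ i t, 0 ≤ p i t) (hpsum : ∀ i, ∑ t, p i t = 1)
    (F : Fin n → MeasureTheory.Measure ℝ)
    (hF : ∀ i, F i = ∑ t, ENNReal.ofReal (p i t) • G t) :
    optRevenue n F ≤
      ∑ q : Fin n → Fin k, (∏ i, p i (q i)) * optRevenue n (fun i => G (q i)) :=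
  optRevenue_mixture_le_avg_general n k G hGprob hGsupp p hp F hF
end

section
/- Let X_1,…,X_n, Y_1,…,Y_m (with m ≤ n) be jointly independent real-valued random variables with continuous cumulative distribution functions, and suppose there is an injection σ : {1,…,m} → {1,…,n} such that Y_j has the same distribution as X_{σ(j)} for every j. Then the probability that the overall maximum of (X_1,…,X_n, Y_1,…,Y_m) is attained by one of the Y_j is at most 1/2. -/
/-!
Let `e` be the permutation of the bidders that exchanges each duplicate `Y j` with its original
`X (σ j)`. Since the bidders are independent and `e` only permutes coordinates with equal laws,
the joint law of all bids is `e`-invariant, so "the maximum is attained by a duplicate" and "the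
maximum is attained by an original `X (σ j)`" have the same probability. Both events can occur
only when two different bidders tie, which has probability zero because continuous cdfs have no
atoms. Two events of equal probability that are almost disjoint have probability at most `1/2`.
-/

open MeasureTheory ProbabilityTheory

namespace Function.Embedding

variable {α β : Type*} (f : β ↪ α)

open Classical in
noncomputable def sumSwap : Equiv.Perm (α ⊕ β) :=
  Equiv.Perm.extendDomain (Equiv.sumComm β β)
    (Equiv.ofInjective (Sum.map f id) (f.injective.sumMap injective_id))

@[simp]
theorem sumSwap_inr (b : β) : f.sumSwap (Sum.inr b) = Sum.inl (f b) := by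
  classical
  exact Equiv.Perm.extendDomain_apply_image _ _ (Sum.inr b)

@[simp]
theorem sumSwap_inl_apply (b : β) : f.sumSwap (Sum.inl (f b)) = Sum.inr b := by
  classical
  exact Equiv.Perm.extendDomain_apply_image _ _ (Sum.inl b)

theorem sumSwap_inl_of_notMem_range {a : α} (ha : a ∉ Set.range f) :
    f.sumSwap (Sum.inl a) = Sum.inl a := by
  classical
  refine Equiv.Perm.extendDomain_apply_not_subtype _ _ ?_
  rintro ⟨b | b, hb⟩ <;> simp_all

theorem comp_sumSwap {γ : Type*} (L : α ⊕ β → γ)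
    (hL : ∀ b, L (Sum.inr b) = L (Sum.inl (f b))) : L ∘ f.sumSwap = L := by
  funext k
  rcases k with a | b
  · by_cases ha : a ∈ Set.range f
    · obtain ⟨b, rfl⟩ := ha
      simp [hL]
    · simp [sumSwap_inl_of_notMem_range f ha]
  · simp [hL]

theorem image_sumSwap_range_inr :
    f.sumSwap '' Set.range Sum.inr = Set.range (Sum.inl ∘ f) := by
  rw [← Set.range_comp]
  exact congrArg Set.range (funext f.sumSwap_inr)

end Function.Embedding

section MaxAttainedOn

variable {ι β : Type*}

def maxAttainedOn [LE β] (s : Set ι) : Set (ι → β) := {f | ∃ k ∈ s, ∀ k', f k' ≤ f k}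

theorem preimage_comp_perm_maxAttainedOn [LE β] (e : Equiv.Perm ι) (s : Set ι) :
    (fun f : ι → β => f ∘ e) ⁻¹' maxAttainedOn s = maxAttainedOn (e '' s) := by
  ext f
  simp only [maxAttainedOn, Set.mem_preimage, Set.mem_ofPred_eq, Function.comp_apply,
    Set.exists_mem_image]
  exact exists_congr fun k => and_congr_right fun _ =>
    e.forall_congr_right (q := fun k' => f k' ≤ f (e k))

theorem maxAttainedOn_inter_subset [PartialOrder β] (s t : Set ι) :
    maxAttainedOn s ∩ maxAttainedOn t ⊆ ⋃ a ∈ s, ⋃ b ∈ t, {f : ι → β | f a = f b} := by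
  rintro f ⟨⟨a, ha, hfa⟩, ⟨b, hb, hfb⟩⟩
  simp only [Set.mem_iUnion, Set.mem_ofPred_eq]
  exact ⟨a, ha, b, hb, le_antisymm (hfb a) (hfa b)⟩

theorem measurableSet_maxAttainedOn [Countable ι] (s : Set ι) :
    MeasurableSet (maxAttainedOn s : Set (ι → ℝ)) := by
  have : (maxAttainedOn s : Set (ι → ℝ)) = ⋃ k ∈ s, ⋂ k', {f | f k' ≤ f k} := by
    ext f; simp [maxAttainedOn]
  rw [this]
  exact .biUnion s.to_countable fun k _ => .iInter fun k' =>
    measurableSet_le (measurable_pi_apply k') (measurable_pi_apply k)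

end MaxAttainedOn

theorem nullSingletonClass_of_continuous_cdf (μ : Measure ℝ) [IsProbabilityMeasure μ]
    (h : Continuous fun x : ℝ => (μ (Set.Iic x)).toReal) : NullSingletonClass μ := by
  have hcdf : Continuous (cdf μ) := by
    simpa only [← measureReal_def, ← cdf_eq_real] using h
  refine ⟨fun a => ?_⟩
  rw [← measure_cdf μ, StieltjesFunction.measure_singleton,
    hcdf.continuousWithinAt.leftLim_eq, sub_self, ENNReal.ofReal_zero]

theorem measure_toReal_le_half_of_eq_of_inter_null {Ω : Type*} [MeasurableSpace Ω]
    {P : Measure Ω} [IsProbabilityMeasure P] {A B : Set Ω} (hB : MeasurableSet B)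
    (hAB : P A = P B) (hinter : P (A ∩ B) = 0) : (P A).toReal ≤ 1 / 2 := by
  have h : P A + P A ≤ 1 := by
    calc P A + P A = P (A ∪ B) + P (A ∩ B) := by rw [measure_union_add_inter A hB, hAB]
      _ ≤ 1 := by rw [hinter, add_zero]; exact prob_le_one
  have := ENNReal.toReal_mono ENNReal.one_ne_top h
  rw [ENNReal.toReal_add (measure_ne_top P A) (measure_ne_top P A), ENNReal.toReal_one] at this
  linarith

namespace ProbabilityTheory

theorem IndepFun.measure_eq_eq_zero {Ω α : Type*} [MeasurableSpace Ω] [MeasurableSpace α]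
    [MeasurableEq α] {P : Measure Ω} [IsFiniteMeasure P] {f g : Ω → α}
    (hf : Measurable f) (hg : Measurable g) (h : IndepFun f g P)
    [NullSingletonClass (P.map g)] : P {ω | f ω = g ω} = 0 := by
  have hdiag : MeasurableSet {p : α × α | p.1 = p.2} :=
    measurableSet_eq_fun measurable_fst measurable_snd
  change P ((fun ω => (f ω, g ω)) ⁻¹' {p | p.1 = p.2}) = 0
  rw [← Measure.map_apply (hf.prodMk hg) hdiag,
    (indepFun_iff_map_prod_eq_prod_map_map hf.aemeasurable hg.aemeasurable).1 h,
    Measure.prod_apply hdiag]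
  simp [Set.preimage]

variable {Ω ι : Type*} [MeasurableSpace Ω] {P : Measure Ω} {Z : ι → Ω → ℝ}

theorem iIndepFun.map_comp_perm_eq [Fintype ι] (hZ : ∀ k, Measurable (Z k))
    (h : iIndepFun Z P) (e : Equiv.Perm ι) (he : ∀ k, P.map (Z (e k)) = P.map (Z k)) :
    P.map (fun ω k => Z (e k) ω) = P.map (fun ω k => Z k ω) := by
  rw [(h.precomp e.injective).map_fun_eq_pi_map fun k => (hZ (e k)).aemeasurable,
    h.map_fun_eq_pi_map fun k => (hZ k).aemeasurable]
  simp_rw [he]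

theorem iIndepFun.measure_maxAttainedOn_image_perm [Fintype ι] (hZ : ∀ k, Measurable (Z k))
    (h : iIndepFun Z P) (e : Equiv.Perm ι) (he : ∀ k, P.map (Z (e k)) = P.map (Z k))
    (s : Set ι) :
    P ((fun ω k => Z k ω) ⁻¹' maxAttainedOn (e '' s)) =
      P ((fun ω k => Z k ω) ⁻¹' maxAttainedOn s) := by
  have hV : Measurable fun ω k => Z k ω := measurable_pi_lambda _ hZ
  have hVe : Measurable fun ω k => Z (e k) ω := measurable_pi_lambda _ fun k => hZ (e k)
  calc P ((fun ω k => Z k ω) ⁻¹' maxAttainedOn (e '' s))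
      = P.map (fun ω k => Z (e k) ω) (maxAttainedOn s) := by
        rw [← preimage_comp_perm_maxAttainedOn,
          Measure.map_apply hVe (measurableSet_maxAttainedOn s)]
        rfl
    _ = P ((fun ω k => Z k ω) ⁻¹' maxAttainedOn s) := by
        rw [h.map_comp_perm_eq hZ e he, Measure.map_apply hV (measurableSet_maxAttainedOn s)]

theorem iIndepFun.measure_maxAttainedOn_inter_eq_zero [Countable ι] [IsProbabilityMeasure P]
    (hZ : ∀ k, Measurable (Z k)) (h : iIndepFun Z P) {s t : Set ι} (hst : Disjoint s t)
    (hatom : ∀ b ∈ t, NullSingletonClass (P.map (Z b))) :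
    P ((fun ω k => Z k ω) ⁻¹' maxAttainedOn s ∩ (fun ω k => Z k ω) ⁻¹' maxAttainedOn t) = 0 := by
  rw [← Set.preimage_inter]
  refine measure_mono_null (Set.preimage_mono (maxAttainedOn_inter_subset s t)) ?_
  simp only [Set.preimage_iUnion]
  refine (measure_biUnion_null_iff s.to_countable).2 fun a ha => ?_
  refine (measure_biUnion_null_iff t.to_countable).2 fun b hb => ?_
  have := hatom b hb
  exact (h.indepFun (hst.ne_of_mem ha hb)).measure_eq_eq_zero (hZ a) (hZ b)

end ProbabilityTheory

theorem prob_duplicate_attains_max_le_half_general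
    {Ω : Type*} [MeasurableSpace Ω] (P : Measure Ω) [IsProbabilityMeasure P]
    (n m : ℕ)
    (X : Fin n → Ω → ℝ) (Y : Fin m → Ω → ℝ)
    (hXmeas : ∀ i, Measurable (X i)) (hYmeas : ∀ j, Measurable (Y j))
    (hindep : iIndepFun (m := fun _ : Fin n ⊕ Fin m => (inferInstance : MeasurableSpace ℝ))
      (Sum.elim X Y) P)
    (hXcont : ∀ i, Continuous fun x : ℝ => ((P.map (X i)) (Set.Iic x)).toReal)
    (σ : Fin m → Fin n) (hσ : Function.Injective σ)
    (hdist : ∀ j, P.map (Y j) = P.map (X (σ j))) :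
    (P {ω | ∃ j : Fin m, (∀ i : Fin n, X i ω ≤ Y j ω) ∧
        ∀ j' : Fin m, Y j' ω ≤ Y j ω}).toReal ≤ 1 / 2 := by
  set Z := Sum.elim X Y
  have hZ : ∀ k, Measurable (Z k) := Sum.forall.2 ⟨hXmeas, hYmeas⟩
  set e := (⟨σ, hσ⟩ : Fin m ↪ Fin n).sumSwap
  have he : ∀ k, P.map (Z (e k)) = P.map (Z k) :=
    congrFun (Function.Embedding.comp_sumSwap _ (fun k => P.map (Z k)) hdist)
  have himage : e '' Set.range Sum.inr = Set.range (Sum.inl ∘ σ) :=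
    Function.Embedding.image_sumSwap_range_inr _
  have hevent : {ω | ∃ j : Fin m, (∀ i : Fin n, X i ω ≤ Y j ω) ∧ ∀ j' : Fin m, Y j' ω ≤ Y j ω}
      = (fun ω k => Z k ω) ⁻¹' maxAttainedOn (Set.range Sum.inr) := by
    ext ω
    simp [maxAttainedOn, Z]
  have hatom : ∀ b ∈ Set.range (Sum.inl ∘ σ), NullSingletonClass (P.map (Z b)) := by
    rintro _ ⟨j, rfl⟩
    have : IsProbabilityMeasure (P.map (X (σ j))) :=
      Measure.isProbabilityMeasure_map (hXmeas (σ j)).aemeasurable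
    exact nullSingletonClass_of_continuous_cdf (P.map (X (σ j))) (hXcont (σ j))
  rw [hevent]
  refine measure_toReal_le_half_of_eq_of_inter_null
    (measurable_pi_lambda _ hZ (measurableSet_maxAttainedOn _)) ?_
    (hindep.measure_maxAttainedOn_inter_eq_zero hZ ?_ hatom)
  · rw [← himage, hindep.measure_maxAttainedOn_image_perm hZ e he]
  · exact Set.disjoint_range_iff.2 fun _ _ => Sum.inr_ne_inl

/-- A duplicate bidder wins with probability at most `1/2`:
if `X 0, …, X (n-1), Y 0, …, Y (m-1)` (`m ≤ n`) are jointly independent with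
continuous cdfs and each `Y j` is distributed as `X (σ j)` for an injection `σ`,
then the probability that the overall maximum is attained by one of the `Y j`
is at most `1/2`. -/
theorem prob_duplicate_attains_max_le_half
    {Ω : Type*} [MeasurableSpace Ω] (P : Measure Ω) [IsProbabilityMeasure P]
    (n m : ℕ) (hm : m ≤ n)
    (X : Fin n → Ω → ℝ) (Y : Fin m → Ω → ℝ)
    (hXmeas : ∀ i, Measurable (X i)) (hYmeas : ∀ j, Measurable (Y j))
    (hindep : iIndepFun (m := fun _ : Fin n ⊕ Fin m => (inferInstance : MeasurableSpace ℝ))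
      (Sum.elim X Y) P)
    (hXcont : ∀ i, Continuous fun x : ℝ => ((P.map (X i)) (Set.Iic x)).toReal)
    (hYcont : ∀ j, Continuous fun x : ℝ => ((P.map (Y j)) (Set.Iic x)).toReal)
    (σ : Fin m → Fin n) (hσ : Function.Injective σ)
    (hdist : ∀ j, P.map (Y j) = P.map (X (σ j))) :
    (P {ω | ∃ j : Fin m, (∀ i : Fin n, X i ω ≤ Y j ω) ∧
        ∀ j' : Fin m, Y j' ω ≤ Y j ω}).toReal ≤ 1 / 2 :=
  prob_duplicate_attains_max_le_half_general P n m X Y hXmeas hYmeas hindep hXcont σ hσ hdist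
end
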